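/- arXiv:2308.04790 — 3 statements merged into one kernel-verified Lean document; each statement's English description precedes it below -/
import Mathlib

section
/- Let I ⊆ ℝ be an open interval and D₁ ⊆ ℝ^{n_x}, D₂ ⊆ ℝ^{n_y} open sets. Let f : I × D₁ × D₂ → ℝ^{n_x} be continuous and uniformly Lipschitz continuous in (x,y), and let g : I × D₁ × D₂ → ℝ^{n_y} be continuously differentiable with uniformly Lipschitz continuous derivative, such that the partial derivative ∂_y g(t,x,y) ∈ ℝ^{n_y × n_y} is invertible for every (t,x,y) ∈ I × D₁ × D₂. Then for every t₀ ∈ I and every (x₀,y₀) ∈ D₁ × D₂ with g(t₀,x₀,y₀) = 0 there exist an open interval Ĩ with t₀ ∈ Ĩ ⊆ I and C¹ functions x : Ĩ → D₁, y : Ĩ → D₂ with x(t₀) = x₀, y(t₀) = y₀ such that (x,y) is a solution of the semi-explicit DAE on Ĩ; moreover, any two such solutions agree on a neighborhood of t₀. -/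
/-!
Since `∂_y g` is invertible, the implicit function theorem solves the constraint `g t x y = 0`
near `(t₀, x₀, y₀)` as `y = φ (t, x)` with `φ` of class `C¹`, hence locally Lipschitz. The DAE
thereby reduces to the ODE `x' = f t x (φ (t, x))`, whose right-hand side is continuous and
locally Lipschitz in `x`: Picard–Lindelöf gives a solution `x`, and `y := φ (·, x)`. Conversely,
near `t₀` every solution with continuous `y` satisfies `y = φ (·, x)`, so local uniqueness for the
reduced ODE gives local uniqueness for the DAE.
-/

open Set Filter Metric
open scoped Topology NNReal

theorem ContinuousLinearMap.isInvertible_of_bijective {𝕜 E F : Type*} [NontriviallyNormedField 𝕜]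
    [NormedAddCommGroup E] [NormedSpace 𝕜 E] [CompleteSpace E]
    [NormedAddCommGroup F] [NormedSpace 𝕜 F] [CompleteSpace F]
    {A : E →L[𝕜] F} (hA : Function.Bijective A) : A.IsInvertible :=
  ⟨.ofBijective A (LinearMap.ker_eq_bot.2 hA.1) (LinearMap.range_eq_top.2 hA.2), rfl⟩

theorem contDiffAt_one_of_eventually_hasDerivAt {𝕜 F : Type*} [NontriviallyNormedField 𝕜]
    [NormedAddCommGroup F] [NormedSpace 𝕜 F] {α α' : 𝕜 → F} {t : 𝕜}
    (h : ∀ᶠ s in 𝓝 t, HasDerivAt α (α' s) s ∧ ContinuousAt α' s) : ContDiffAt 𝕜 1 α t :=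
  contDiffAt_one_iff.2 ⟨fun s => .toSpanSingleton 𝕜 (α' s), _, h,
    fun _ hs => (ContinuousLinearMap.toSpanSingletonCLE.continuous.continuousAt.comp
      hs.2).continuousWithinAt, fun _ hs => hs.1.hasFDerivAt⟩

theorem exists_eventually_hasDerivAt_of_continuousOn_of_lipschitzOnWith
    {E : Type*} [NormedAddCommGroup E] [NormedSpace ℝ E] [CompleteSpace E]
    {v : ℝ → E → E} {s : Set (ℝ × E)} {t₀ : ℝ} {x₀ : E} {K : ℝ≥0}
    (hs : s ∈ 𝓝 (t₀, x₀)) (hv : ContinuousOn (Function.uncurry v) s)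
    (hK : ∀ t, LipschitzOnWith K (v t) {x | (t, x) ∈ s}) :
    ∃ α : ℝ → E, α t₀ = x₀ ∧ ∀ᶠ t in 𝓝 t₀, HasDerivAt α (v t (α t)) t := by
  -- `L` bounds `v` near `(t₀, x₀)`; the time step `a / (L + 1)` keeps solutions in the ball.
  set L : ℝ≥0 := ‖v t₀ x₀‖₊ + 1
  have hbound : ∀ᶠ p in 𝓝 (t₀, x₀), ‖Function.uncurry v p‖ ≤ L :=
    ((hv.continuousAt hs).norm.eventually (gt_mem_nhds (lt_add_one _))).mono
      fun _ hp => by simpa [L] using hp.le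
  obtain ⟨a, ha, hsub⟩ := nhds_basis_closedBall.mem_iff.1 (inter_mem hs hbound)
  set ε := a / (L + 1)
  have hε : 0 < ε := by positivity
  have hεa : ε ≤ a := div_le_self ha.le (by simp)
  have hmem : ∀ t ∈ Icc (t₀ - ε) (t₀ + ε), ∀ x ∈ closedBall x₀ a,
      (t, x) ∈ s ∩ {p | ‖Function.uncurry v p‖ ≤ L} := fun t ht x hx =>
    hsub (closedBall_prod_same t₀ x₀ a ▸ ⟨closedBall_subset_closedBall hεa
      (Real.closedBall_eq_Icc ▸ ht), hx⟩)
  have hpl : IsPicardLindelof v (tmin := t₀ - ε) (tmax := t₀ + ε)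
      ⟨t₀, by constructor <;> linarith⟩ x₀ ⟨a, ha.le⟩ 0 L K :=
    { lipschitzOnWith := fun t ht => (hK t).mono fun x hx => (hmem t ht x hx).1
      continuousOn := fun x hx => hv.comp (continuous_id.prodMk continuous_const).continuousOn
        fun t ht => (hmem t ht x hx).1
      norm_le := fun t ht x hx => (hmem t ht x hx).2
      mul_max_le := by
        simp only [add_sub_cancel_left, sub_sub_cancel, max_self, NNReal.coe_zero, sub_zero]
        calc (L : ℝ) * ε ≤ (L + 1) * ε := by gcongr; linarith
          _ = a := mul_div_cancel₀ _ (by positivity) }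
  obtain ⟨α, hα₀, hα⟩ := hpl.exists_eq_forall_mem_Icc_hasDerivWithinAt₀
  refine ⟨α, hα₀, ?_⟩
  filter_upwards [Ioo_mem_nhds (by linarith : t₀ - ε < t₀) (by linarith : t₀ < t₀ + ε)]
    with t ht
  exact (hα t (Ioo_subset_Icc_self ht)).hasDerivAt (Icc_mem_nhds ht.1 ht.2)

variable {X Y : Type*} [NormedAddCommGroup X] [NormedSpace ℝ X] [NormedAddCommGroup Y]

theorem exists_implicitFunction_of_isInvertible [CompleteSpace X] [NormedSpace ℝ Y]
    [CompleteSpace Y] {g : ℝ → X → Y → Y} {t₀ : ℝ} {x₀ : X} {y₀ : Y}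
    (hg : ContDiffAt ℝ 1 (fun p : ℝ × X × Y => g p.1 p.2.1 p.2.2) (t₀, x₀, y₀))
    (hinv : (fderiv ℝ (g t₀ x₀) y₀).IsInvertible) (hcons : g t₀ x₀ y₀ = 0) :
    ∃ φ : ℝ × X → Y, φ (t₀, x₀) = y₀ ∧ ContDiffAt ℝ 1 φ (t₀, x₀) ∧
      ∀ᶠ q in 𝓝 (t₀, x₀, y₀), g q.1 q.2.1 q.2.2 = 0 ↔ φ (q.1, q.2.1) = q.2.2 := by
  set G : (ℝ × X) × Y → Y := fun q => g q.1.1 q.1.2 q.2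
  have hG : ContDiffAt ℝ 1 G ((t₀, x₀), y₀) :=
    ContDiffAt.comp (g := fun p : ℝ × X × Y => g p.1 p.2.1 p.2.2) ((t₀, x₀), y₀) hg
      (by fun_prop : ContDiff ℝ 1 fun q : (ℝ × X) × Y => (q.1.1, q.1.2, q.2)).contDiffAt
  have hpartial : fderiv ℝ G ((t₀, x₀), y₀) ∘L .inr ℝ (ℝ × X) Y = fderiv ℝ (g t₀ x₀) y₀ :=
    (((hG.differentiableAt one_ne_zero).hasFDerivAt.comp y₀
      (hasFDerivAt_prodMk_right (t₀, x₀) y₀)).fderiv).symm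
  have hinv' := hpartial ▸ hinv
  refine ⟨hG.implicitFunction one_ne_zero hinv', hG.implicitFunction_apply_self _ _,
    hG.contDiffAt_implicitFunction _ _, ?_⟩
  have hassoc : Tendsto (fun q : ℝ × X × Y => ((q.1, q.2.1), q.2.2)) (𝓝 (t₀, x₀, y₀))
      (𝓝 ((t₀, x₀), y₀)) :=
    (by fun_prop : Continuous fun q : ℝ × X × Y => ((q.1, q.2.1), q.2.2)).tendsto _
  filter_upwards
    [hassoc.eventually (hG.eventually_apply_eq_iff_implicitFunction one_ne_zero hinv')] with q hq
  simpa [G, hcons] using hq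

namespace SemiExplicitDAE

def reducedField (f : ℝ → X → Y → X) (φ : ℝ × X → Y) (t : ℝ) (x : X) : X := f t x (φ (t, x))

variable {f : ℝ → X → Y → X} {g : ℝ → X → Y → Y} {W : Set (ℝ × X × Y)} {Lf : ℝ≥0}
  {φ : ℝ × X → Y} {t₀ : ℝ} {x₀ : X} {y₀ : Y}

theorem exists_mem_nhds_lipschitzOnWith_reducedField [NormedSpace ℝ Y]
    (hW : W ∈ 𝓝 (t₀, x₀, y₀))
    (hfLip : ∀ t, LipschitzOnWith Lf (fun p : X × Y => f t p.1 p.2) {p | (t, p) ∈ W})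
    (hφ : ContDiffAt ℝ 1 φ (t₀, x₀)) (hφ₀ : φ (t₀, x₀) = y₀) :
    ∃ N ∈ 𝓝 (t₀, x₀), ∃ K : ℝ≥0,
      (∀ t, LipschitzOnWith K (reducedField f φ t) {x | (t, x) ∈ N}) ∧
      ∀ p ∈ N, (p.1, p.2, φ p) ∈ W ∧ ContDiffAt ℝ 1 φ p := by
  obtain ⟨K, S, hS, hφK⟩ := hφ.exists_lipschitzOnWith
  have hgraph : Tendsto (fun p : ℝ × X => (p.1, p.2, φ p)) (𝓝 (t₀, x₀)) (𝓝 (t₀, x₀, y₀)) :=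
    hφ₀ ▸ continuousAt_fst.prodMk (continuousAt_snd.prodMk hφ.continuousAt)
  refine ⟨S ∩ {p | (p.1, p.2, φ p) ∈ W ∧ ContDiffAt ℝ 1 φ p},
    inter_mem hS ((hgraph.eventually hW).and (hφ.eventually (by simp))), Lf * max 1 K,
    fun t => ?_, fun p hp => hp.2⟩
  have hgraph_t : LipschitzOnWith (max 1 (K * 1)) (fun x => (x, φ (t, x)))
      {x | (t, x) ∈ S ∩ {p | (p.1, p.2, φ p) ∈ W ∧ ContDiffAt ℝ 1 φ p}} :=
    LipschitzWith.id.lipschitzOnWith.prodMk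
      (hφK.comp (LipschitzWith.prodMk_left t).lipschitzOnWith fun x hx => hx.1)
  rw [mul_one] at hgraph_t
  exact (hfLip t).comp hgraph_t fun x hx => hx.2.1

theorem eventually_hasDerivAt_reducedField
    (hφg : ∀ᶠ q in 𝓝 (t₀, x₀, y₀), g q.1 q.2.1 q.2.2 = 0 ↔ φ (q.1, q.2.1) = q.2.2)
    {N : Set (ℝ × X)} (hN : N ∈ 𝓝 (t₀, x₀)) {x : ℝ → X} {y : ℝ → Y}
    (hy : ContinuousAt y t₀) (hx₀ : x t₀ = x₀) (hy₀ : y t₀ = y₀)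
    (h : ∀ᶠ t in 𝓝 t₀, HasDerivAt x (f t (x t) (y t)) t ∧ g t (x t) (y t) = 0) :
    ∀ᶠ t in 𝓝 t₀, φ (t, x t) = y t ∧ HasDerivAt x (reducedField f φ t (x t)) t ∧
      (t, x t) ∈ N := by
  have hx : ContinuousAt x t₀ := h.self_of_nhds.1.continuousAt
  have hxt : Tendsto (fun t => (t, x t)) (𝓝 t₀) (𝓝 (t₀, x₀)) :=
    hx₀ ▸ continuousAt_id.prodMk hx
  have hxyt : Tendsto (fun t => (t, x t, y t)) (𝓝 t₀) (𝓝 (t₀, x₀, y₀)) :=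
    hx₀ ▸ hy₀ ▸ continuousAt_id.prodMk (hx.prodMk hy)
  filter_upwards [hxyt.eventually hφg, h, hxt.eventually hN] with t hφt ht htN
  have hφy : φ (t, x t) = y t := hφt.1 ht.2
  exact ⟨hφy, by rw [reducedField, hφy]; exact ht.1, htN⟩

theorem exists_eventually_solution [CompleteSpace X] [NormedSpace ℝ Y]
    (hW : W ∈ 𝓝 (t₀, x₀, y₀)) (hf : ContinuousOn (fun p : ℝ × X × Y => f p.1 p.2.1 p.2.2) W)
    (hfLip : ∀ t, LipschitzOnWith Lf (fun p : X × Y => f t p.1 p.2) {p | (t, p) ∈ W})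
    (hφ : ContDiffAt ℝ 1 φ (t₀, x₀)) (hφ₀ : φ (t₀, x₀) = y₀)
    (hφg : ∀ᶠ q in 𝓝 (t₀, x₀, y₀), g q.1 q.2.1 q.2.2 = 0 ↔ φ (q.1, q.2.1) = q.2.2) :
    ∃ (x : ℝ → X) (y : ℝ → Y), x t₀ = x₀ ∧ y t₀ = y₀ ∧ ∀ᶠ t in 𝓝 t₀,
      ContDiffAt ℝ 1 x t ∧ ContDiffAt ℝ 1 y t ∧ (t, x t, y t) ∈ W ∧
      HasDerivAt x (f t (x t) (y t)) t ∧ g t (x t) (y t) = 0 := by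
  obtain ⟨N, hN, K, hK, hNW⟩ :=
    exists_mem_nhds_lipschitzOnWith_reducedField hW hfLip hφ hφ₀
  have hv : ContinuousOn (Function.uncurry (reducedField f φ)) (interior N) :=
    hf.comp (continuousOn_fst.prodMk (continuousOn_snd.prodMk fun p hp =>
      (hNW p (interior_subset hp)).2.continuousAt.continuousWithinAt))
      fun p hp => (hNW p (interior_subset hp)).1
  obtain ⟨x, hx₀, hx⟩ := exists_eventually_hasDerivAt_of_continuousOn_of_lipschitzOnWith
    (interior_mem_nhds.2 hN) hv fun t => (hK t).mono fun _ hx => interior_subset (s := N) hx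
  have hxt : Tendsto (fun t => (t, x t)) (𝓝 t₀) (𝓝 (t₀, x₀)) :=
    hx₀ ▸ continuousAt_id.prodMk hx.self_of_nhds.continuousAt
  have hgraph : Tendsto (fun t => (t, x t, φ (t, x t))) (𝓝 t₀) (𝓝 (t₀, x₀, y₀)) :=
    hφ₀ ▸ (continuousAt_fst.prodMk (continuousAt_snd.prodMk hφ.continuousAt)).tendsto.comp hxt
  have hxN : ∀ᶠ t in 𝓝 t₀, (t, x t) ∈ interior N :=
    hxt.eventually (interior_mem_nhds.2 hN)
  have hxC1 : ∀ᶠ t in 𝓝 t₀, ContDiffAt ℝ 1 x t := by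
    filter_upwards [(hx.and hxN).eventually_nhds] with t ht
    refine contDiffAt_one_of_eventually_hasDerivAt (α' := fun s => reducedField f φ s (x s)) ?_
    filter_upwards [ht] with s ⟨hs, hsN⟩
    exact ⟨hs, (hv.continuousAt (isOpen_interior.mem_nhds hsN)).comp
      (f := fun s => (s, x s)) (continuousAt_id.prodMk hs.continuousAt)⟩
  refine ⟨x, fun t => φ (t, x t), hx₀, by simp [hx₀, hφ₀], ?_⟩
  filter_upwards [hx, hxN, hxC1, hgraph.eventually hW, hgraph.eventually hφg]
    with t hxt htN hC1 htW hgt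
  exact ⟨hC1, (hNW _ (interior_subset htN)).2.comp t (contDiffAt_id.prodMk hC1), htW, hxt,
    hgt.2 rfl⟩

theorem eventuallyEq_of_solution [NormedSpace ℝ Y]
    (hW : W ∈ 𝓝 (t₀, x₀, y₀))
    (hfLip : ∀ t, LipschitzOnWith Lf (fun p : X × Y => f t p.1 p.2) {p | (t, p) ∈ W})
    (hφ : ContDiffAt ℝ 1 φ (t₀, x₀)) (hφ₀ : φ (t₀, x₀) = y₀)
    (hφg : ∀ᶠ q in 𝓝 (t₀, x₀, y₀), g q.1 q.2.1 q.2.2 = 0 ↔ φ (q.1, q.2.1) = q.2.2)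
    {x₁ x₂ : ℝ → X} {y₁ y₂ : ℝ → Y} (hy₁ : ContinuousAt y₁ t₀) (hy₂ : ContinuousAt y₂ t₀)
    (hx₁₀ : x₁ t₀ = x₀) (hy₁₀ : y₁ t₀ = y₀) (hx₂₀ : x₂ t₀ = x₀) (hy₂₀ : y₂ t₀ = y₀)
    (h₁ : ∀ᶠ t in 𝓝 t₀, HasDerivAt x₁ (f t (x₁ t) (y₁ t)) t ∧ g t (x₁ t) (y₁ t) = 0)
    (h₂ : ∀ᶠ t in 𝓝 t₀, HasDerivAt x₂ (f t (x₂ t) (y₂ t)) t ∧ g t (x₂ t) (y₂ t) = 0) :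
    x₁ =ᶠ[𝓝 t₀] x₂ ∧ y₁ =ᶠ[𝓝 t₀] y₂ := by
  obtain ⟨N, hN, K, hK, -⟩ :=
    exists_mem_nhds_lipschitzOnWith_reducedField hW hfLip hφ hφ₀
  have r₁ := eventually_hasDerivAt_reducedField hφg hN hy₁ hx₁₀ hy₁₀ h₁
  have r₂ := eventually_hasDerivAt_reducedField hφg hN hy₂ hx₂₀ hy₂₀ h₂
  have hx : x₁ =ᶠ[𝓝 t₀] x₂ :=
    ODE_solution_unique_of_eventually (s := fun t => {x | (t, x) ∈ N}) (.of_forall hK)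
      (r₁.mono fun _ ht => ht.2) (r₂.mono fun _ ht => ht.2) (hx₁₀.trans hx₂₀.symm)
  refine ⟨hx, ?_⟩
  filter_upwards [hx, r₁, r₂] with t hxt ht₁ ht₂
  rw [← ht₁.1, ← ht₂.1, hxt]

end SemiExplicitDAE

theorem dae_index_one_existence_uniqueness_general (nx ny : ℕ)
    (I : Set ℝ) (hIopen : IsOpen I)
    (D₁ : Set (Fin nx → ℝ)) (hD₁ : IsOpen D₁)
    (D₂ : Set (Fin ny → ℝ)) (hD₂ : IsOpen D₂)
    (f : ℝ → (Fin nx → ℝ) → (Fin ny → ℝ) → (Fin nx → ℝ))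
    (g : ℝ → (Fin nx → ℝ) → (Fin ny → ℝ) → (Fin ny → ℝ))
    (hfcont : ContinuousOn (fun p : ℝ × (Fin nx → ℝ) × (Fin ny → ℝ) =>
      f p.1 p.2.1 p.2.2) (I ×ˢ D₁ ×ˢ D₂))
    (hfLip : ∃ L : NNReal, ∀ t ∈ I, LipschitzOnWith L
      (fun p : (Fin nx → ℝ) × (Fin ny → ℝ) => f t p.1 p.2) (D₁ ×ˢ D₂))
    (hg : ContDiffOn ℝ 1 (fun p : ℝ × (Fin nx → ℝ) × (Fin ny → ℝ) =>
      g p.1 p.2.1 p.2.2) (I ×ˢ D₁ ×ˢ D₂))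
    (hinv : ∀ t ∈ I, ∀ x ∈ D₁, ∀ y ∈ D₂,
      Function.Bijective ⇑(fderiv ℝ (fun y' => g t x y') y))
    (t₀ : ℝ) (ht₀ : t₀ ∈ I)
    (x₀ : Fin nx → ℝ) (hx₀ : x₀ ∈ D₁)
    (y₀ : Fin ny → ℝ) (hy₀ : y₀ ∈ D₂)
    (hcons : g t₀ x₀ y₀ = 0) :
    ∃ (J : Set ℝ) (x : ℝ → Fin nx → ℝ) (y : ℝ → Fin ny → ℝ),
      t₀ ∈ J ∧ J ⊆ I ∧ IsOpen J ∧ J.OrdConnected ∧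
      ContDiffOn ℝ 1 x J ∧ ContDiffOn ℝ 1 y J ∧
      (∀ t ∈ J, x t ∈ D₁) ∧ (∀ t ∈ J, y t ∈ D₂) ∧
      (∀ t ∈ J, HasDerivAt x (f t (x t) (y t)) t) ∧
      (∀ t ∈ J, g t (x t) (y t) = 0) ∧
      x t₀ = x₀ ∧ y t₀ = y₀ ∧
      (∀ (J' : Set ℝ) (x' : ℝ → Fin nx → ℝ) (y' : ℝ → Fin ny → ℝ),
        t₀ ∈ J' → J' ⊆ I → IsOpen J' → J'.OrdConnected →
        ContDiffOn ℝ 1 x' J' → ContDiffOn ℝ 1 y' J' →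
        (∀ t ∈ J', x' t ∈ D₁) → (∀ t ∈ J', y' t ∈ D₂) →
        (∀ t ∈ J', HasDerivAt x' (f t (x' t) (y' t)) t) →
        (∀ t ∈ J', g t (x' t) (y' t) = 0) →
        x' t₀ = x₀ → y' t₀ = y₀ →
        ∀ᶠ t in nhds t₀, x' t = x t ∧ y' t = y t) := by
  obtain ⟨L, hfLip⟩ := hfLip
  have hW : I ×ˢ D₁ ×ˢ D₂ ∈ 𝓝 (t₀, x₀, y₀) :=
    (hIopen.prod (hD₁.prod hD₂)).mem_nhds ⟨ht₀, hx₀, hy₀⟩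
  have hfLip' : ∀ t, LipschitzOnWith L (fun p : (Fin nx → ℝ) × (Fin ny → ℝ) => f t p.1 p.2)
      {p | (t, p) ∈ I ×ˢ D₁ ×ˢ D₂} := fun t _ hp _ hq => hfLip t hp.1 hp.2 hq.2
  obtain ⟨φ, hφ₀, hφ, hφg⟩ := exists_implicitFunction_of_isInvertible (hg.contDiffAt hW)
    (ContinuousLinearMap.isInvertible_of_bijective (hinv t₀ ht₀ x₀ hx₀ y₀ hy₀)) hcons
  obtain ⟨x, y, hx₀', hy₀', hsol⟩ :=
    SemiExplicitDAE.exists_eventually_solution hW hfcont hfLip' hφ hφ₀ hφg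
  obtain ⟨δ, hδ, hJ⟩ := Metric.eventually_nhds_iff_ball.1 hsol
  choose hxC1 hyC1 hmem hderiv hzero using hJ
  refine ⟨ball t₀ δ, x, y, mem_ball_self hδ, fun t ht => (hmem t ht).1, isOpen_ball,
    Real.ball_eq_Ioo t₀ δ ▸ ordConnected_Ioo, fun t ht => (hxC1 t ht).contDiffWithinAt,
    fun t ht => (hyC1 t ht).contDiffWithinAt, fun t ht => (hmem t ht).2.1,
    fun t ht => (hmem t ht).2.2, hderiv, hzero, hx₀', hy₀', ?_⟩
  intro J' x' y' ht₀J' _ hJ' _ _ hy' _ _ hx'sol hy'sol hx'₀ hy'₀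
  have hJ'nhds : J' ∈ 𝓝 t₀ := hJ'.mem_nhds ht₀J'
  obtain ⟨hx, hy⟩ := SemiExplicitDAE.eventuallyEq_of_solution hW hfLip' hφ hφ₀ hφg
    (hy'.continuousOn.continuousAt hJ'nhds) (hyC1 t₀ (mem_ball_self hδ)).continuousAt
    hx'₀ hy'₀ hx₀' hy₀' (eventually_of_mem hJ'nhds fun t ht => ⟨hx'sol t ht, hy'sol t ht⟩)
    (hsol.mono fun _ ht => ht.2.2.2)
  exact hx.and hy

/-- **Existence and local uniqueness for index-1 semi-explicit DAEs.**
If `f` is continuous and uniformly Lipschitz in `(x,y)`, `g` is continuously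
differentiable with uniformly Lipschitz derivative, and the partial derivative
`∂_y g` is invertible everywhere on `I × D₁ × D₂`, then for every consistent
initial value `(t₀, x₀, y₀)` (i.e. `g t₀ x₀ y₀ = 0`) there is a locally unique
`C¹` solution of the semi-explicit DAE `x' = f(t,x,y)`, `0 = g(t,x,y)`. -/
theorem dae_index_one_existence_uniqueness (nx ny : ℕ)
    (I : Set ℝ) (hIopen : IsOpen I) (hIint : I.OrdConnected)
    (D₁ : Set (Fin nx → ℝ)) (hD₁ : IsOpen D₁)
    (D₂ : Set (Fin ny → ℝ)) (hD₂ : IsOpen D₂)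
    (f : ℝ → (Fin nx → ℝ) → (Fin ny → ℝ) → (Fin nx → ℝ))
    (g : ℝ → (Fin nx → ℝ) → (Fin ny → ℝ) → (Fin ny → ℝ))
    (hfcont : ContinuousOn (fun p : ℝ × (Fin nx → ℝ) × (Fin ny → ℝ) =>
      f p.1 p.2.1 p.2.2) (I ×ˢ D₁ ×ˢ D₂))
    (hfLip : ∃ L : NNReal, ∀ t ∈ I, LipschitzOnWith L
      (fun p : (Fin nx → ℝ) × (Fin ny → ℝ) => f t p.1 p.2) (D₁ ×ˢ D₂))
    (hg : ContDiffOn ℝ 1 (fun p : ℝ × (Fin nx → ℝ) × (Fin ny → ℝ) =>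
      g p.1 p.2.1 p.2.2) (I ×ˢ D₁ ×ˢ D₂))
    (hgLip : ∃ L : NNReal, LipschitzOnWith L
      (fun p : ℝ × (Fin nx → ℝ) × (Fin ny → ℝ) =>
        fderiv ℝ (fun q : ℝ × (Fin nx → ℝ) × (Fin ny → ℝ) => g q.1 q.2.1 q.2.2) p)
      (I ×ˢ D₁ ×ˢ D₂))
    (hinv : ∀ t ∈ I, ∀ x ∈ D₁, ∀ y ∈ D₂,
      Function.Bijective ⇑(fderiv ℝ (fun y' => g t x y') y))
    (t₀ : ℝ) (ht₀ : t₀ ∈ I)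
    (x₀ : Fin nx → ℝ) (hx₀ : x₀ ∈ D₁)
    (y₀ : Fin ny → ℝ) (hy₀ : y₀ ∈ D₂)
    (hcons : g t₀ x₀ y₀ = 0) :
    ∃ (J : Set ℝ) (x : ℝ → Fin nx → ℝ) (y : ℝ → Fin ny → ℝ),
      t₀ ∈ J ∧ J ⊆ I ∧ IsOpen J ∧ J.OrdConnected ∧
      ContDiffOn ℝ 1 x J ∧ ContDiffOn ℝ 1 y J ∧
      (∀ t ∈ J, x t ∈ D₁) ∧ (∀ t ∈ J, y t ∈ D₂) ∧
      (∀ t ∈ J, HasDerivAt x (f t (x t) (y t)) t) ∧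
      (∀ t ∈ J, g t (x t) (y t) = 0) ∧
      x t₀ = x₀ ∧ y t₀ = y₀ ∧
      (∀ (J' : Set ℝ) (x' : ℝ → Fin nx → ℝ) (y' : ℝ → Fin ny → ℝ),
        t₀ ∈ J' → J' ⊆ I → IsOpen J' → J'.OrdConnected →
        ContDiffOn ℝ 1 x' J' → ContDiffOn ℝ 1 y' J' →
        (∀ t ∈ J', x' t ∈ D₁) → (∀ t ∈ J', y' t ∈ D₂) →
        (∀ t ∈ J', HasDerivAt x' (f t (x' t) (y' t)) t) →
        (∀ t ∈ J', g t (x' t) (y' t) = 0) →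
        x' t₀ = x₀ → y' t₀ = y₀ →
        ∀ᶠ t in nhds t₀, x' t = x t ∧ y' t = y t) :=
  dae_index_one_existence_uniqueness_general nx ny I hIopen D₁ hD₁ D₂ hD₂ f g hfcont hfLip hg hinv
    t₀ ht₀ x₀ hx₀ y₀ hy₀ hcons
end

section
/- Let I ⊆ ℝ be an open interval and D₁ ⊆ ℝ^{n_x}, D₂ ⊆ ℝ^{n_y} open sets, f : I × D₁ × D₂ → ℝ^{n_x} continuous and g : I × D₁ × D₂ → ℝ^{n_y} differentiable. Suppose x : Ĩ → D₁ and y : Ĩ → D₂ are C¹ functions on an open interval Ĩ ⊆ I satisfying the reduced problem, i.e. x'(t) = f(t,x(t),y(t)) and 0 = ∂_t g(t,x(t),y(t)) + ∂_x g(t,x(t),y(t)) f(t,x(t),y(t)) + ∂_y g(t,x(t),y(t)) y'(t) for all t ∈ Ĩ, and suppose g(t₀,x(t₀),y(t₀)) = 0 for some t₀ ∈ Ĩ. Then g(t,x(t),y(t)) = 0 for all t ∈ Ĩ, so (x,y) is a solution of the original semi-explicit DAE on Ĩ. -/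
/-! Along a solution, `t ↦ g(t, x(t), y(t))` has derivative
`∂_t g + ∂_x g · x' + ∂_y g · y'` by the chain rule; since `x' = f`, the reduced equation says that
this derivative vanishes. Hence the constraint residual is constant on the interval `J`, and it
vanishes at `t₀`. -/

variable {E F V : Type*} [NormedAddCommGroup E] [NormedSpace ℝ E]
  [NormedAddCommGroup F] [NormedSpace ℝ F] [NormedAddCommGroup V] [NormedSpace ℝ V]

theorem DifferentiableAt.hasDerivAt_comp_curve_eq_sum_partials {G : ℝ × E × F → V}
    {x : ℝ → E} {y : ℝ → F} {t : ℝ} {x' : E} {y' : F}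
    (hG : DifferentiableAt ℝ G (t, x t, y t)) (hx : HasDerivAt x x' t) (hy : HasDerivAt y y' t) :
    HasDerivAt (fun s => G (s, x s, y s))
      (deriv (fun s => G (s, x t, y t)) t + fderiv ℝ (fun u => G (t, u, y t)) (x t) x'
        + fderiv ℝ (fun v => G (t, x t, v)) (y t) y') t := by
  set L := fderiv ℝ G (t, x t, y t)
  have hL : HasFDerivAt G L (t, x t, y t) := hG.hasFDerivAt
  have h_t : HasDerivAt (fun s => G (s, x t, y t)) (L (1, 0, 0)) t :=
    hL.comp_hasDerivAt t ((hasDerivAt_id t).prodMk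
      ((hasDerivAt_const t (x t)).prodMk (hasDerivAt_const t (y t))))
  have h_x : HasFDerivAt (fun u => G (t, u, y t))
      (L.comp ((ContinuousLinearMap.inr ℝ ℝ (E × F)).comp (ContinuousLinearMap.inl ℝ E F))) (x t) :=
    hL.comp (x t) <| (hasFDerivAt_prodMk_right t (x t, y t)).comp (x t)
      (hasFDerivAt_prodMk_left (x t) (y t))
  have h_y : HasFDerivAt (fun v => G (t, x t, v))
      (L.comp ((ContinuousLinearMap.inr ℝ ℝ (E × F)).comp (ContinuousLinearMap.inr ℝ E F))) (y t) :=
    hL.comp (y t) <| (hasFDerivAt_prodMk_right t (x t, y t)).comp (y t)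
      (hasFDerivAt_prodMk_right (x t) (y t))
  have h_split : L (1, x', y') = L (1, 0, 0) + L (0, x', 0) + L (0, 0, y') := by
    rw [← map_add, ← map_add]
    simp
  rw [h_t.deriv, h_x.fderiv, h_y.fderiv]
  simp only [ContinuousLinearMap.comp_apply, ContinuousLinearMap.inl_apply,
    ContinuousLinearMap.inr_apply]
  rw [← h_split]
  exact hL.comp_hasDerivAt t ((hasDerivAt_id t).prodMk (hx.prodMk hy))

theorem reduced_solution_is_dae_solution_general (nx ny : ℕ)
    (I : Set ℝ) (hIopen : IsOpen I)
    (D₁ : Set (Fin nx → ℝ)) (hD₁ : IsOpen D₁)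
    (D₂ : Set (Fin ny → ℝ)) (hD₂ : IsOpen D₂)
    (f : ℝ → (Fin nx → ℝ) → (Fin ny → ℝ) → (Fin nx → ℝ))
    (g : ℝ → (Fin nx → ℝ) → (Fin ny → ℝ) → (Fin ny → ℝ))
    (hgdiff : DifferentiableOn ℝ (fun p : ℝ × (Fin nx → ℝ) × (Fin ny → ℝ) =>
      g p.1 p.2.1 p.2.2) (I ×ˢ D₁ ×ˢ D₂))
    (J : Set ℝ) (hJI : J ⊆ I) (hJopen : IsOpen J) (hJint : J.OrdConnected)
    (x : ℝ → Fin nx → ℝ) (y : ℝ → Fin ny → ℝ)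
    (hy : ContDiffOn ℝ 1 y J)
    (hxD : ∀ t ∈ J, x t ∈ D₁) (hyD : ∀ t ∈ J, y t ∈ D₂)
    (hode : ∀ t ∈ J, HasDerivAt x (f t (x t) (y t)) t)
    (hred : ∀ t ∈ J,
      deriv (fun s => g s (x t) (y t)) t
        + fderiv ℝ (fun x' => g t x' (y t)) (x t) (f t (x t) (y t))
        + fderiv ℝ (fun y' => g t (x t) y') (y t) (deriv y t) = 0)
    (t₀ : ℝ) (ht₀ : t₀ ∈ J) (hcons : g t₀ (x t₀) (y t₀) = 0) :
    ∀ t ∈ J, g t (x t) (y t) = 0 := by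
  have hresidual : ∀ t ∈ J, HasDerivAt (fun s => g s (x s) (y s)) 0 t := by
    intro t ht
    have hg : DifferentiableAt ℝ (fun p : ℝ × (Fin nx → ℝ) × (Fin ny → ℝ) => g p.1 p.2.1 p.2.2)
        (t, x t, y t) :=
      hgdiff.differentiableAt <|
        (hIopen.prod (hD₁.prod hD₂)).mem_nhds ⟨hJI ht, hxD t ht, hyD t ht⟩
    have hy' : HasDerivAt y (deriv y t) t :=
      ((hy.differentiableOn one_ne_zero t ht).differentiableAt (hJopen.mem_nhds ht)).hasDerivAt
    rw [← hred t ht]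
    exact hg.hasDerivAt_comp_curve_eq_sum_partials (hode t ht) hy'
  intro t ht
  rw [← hcons]
  exact hJopen.is_const_of_deriv_eq_zero hJint.isPreconnected
    (fun s hs => (hresidual s hs).differentiableAt.differentiableWithinAt)
    (fun s hs => (hresidual s hs).deriv) ht ht₀

/-- If `(x,y)` solves the reduced problem
`x' = f(t,x,y)`, `0 = ∂_t g + ∂_x g · f + ∂_y g · y'` on an open interval `J`,
and the original constraint `g(t₀, x(t₀), y(t₀)) = 0` holds at some `t₀ ∈ J`,
then `g(t, x(t), y(t)) = 0` on all of `J`, i.e. `(x,y)` solves the original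
semi-explicit DAE. -/
theorem reduced_solution_is_dae_solution (nx ny : ℕ)
    (I : Set ℝ) (hIopen : IsOpen I) (hIint : I.OrdConnected)
    (D₁ : Set (Fin nx → ℝ)) (hD₁ : IsOpen D₁)
    (D₂ : Set (Fin ny → ℝ)) (hD₂ : IsOpen D₂)
    (f : ℝ → (Fin nx → ℝ) → (Fin ny → ℝ) → (Fin nx → ℝ))
    (g : ℝ → (Fin nx → ℝ) → (Fin ny → ℝ) → (Fin ny → ℝ))
    (hfcont : ContinuousOn (fun p : ℝ × (Fin nx → ℝ) × (Fin ny → ℝ) =>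
      f p.1 p.2.1 p.2.2) (I ×ˢ D₁ ×ˢ D₂))
    (hgdiff : DifferentiableOn ℝ (fun p : ℝ × (Fin nx → ℝ) × (Fin ny → ℝ) =>
      g p.1 p.2.1 p.2.2) (I ×ˢ D₁ ×ˢ D₂))
    (J : Set ℝ) (hJI : J ⊆ I) (hJopen : IsOpen J) (hJint : J.OrdConnected)
    (x : ℝ → Fin nx → ℝ) (y : ℝ → Fin ny → ℝ)
    (hx : ContDiffOn ℝ 1 x J) (hy : ContDiffOn ℝ 1 y J)
    (hxD : ∀ t ∈ J, x t ∈ D₁) (hyD : ∀ t ∈ J, y t ∈ D₂)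
    (hode : ∀ t ∈ J, HasDerivAt x (f t (x t) (y t)) t)
    (hred : ∀ t ∈ J,
      deriv (fun s => g s (x t) (y t)) t
        + fderiv ℝ (fun x' => g t x' (y t)) (x t) (f t (x t) (y t))
        + fderiv ℝ (fun y' => g t (x t) y') (y t) (deriv y t) = 0)
    (t₀ : ℝ) (ht₀ : t₀ ∈ J) (hcons : g t₀ (x t₀) (y t₀) = 0) :
    ∀ t ∈ J, g t (x t) (y t) = 0 :=
  reduced_solution_is_dae_solution_general nx ny I hIopen D₁ hD₁ D₂ hD₂ f g hgdiff J hJI hJopen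
    hJint x y hy hxD hyD hode hred t₀ ht₀ hcons
end

section
/- Let I ⊆ ℝ be an open interval and D₁ ⊆ ℝ^{n_x}, D₂ ⊆ ℝ^{n_y} open sets, f : I × D₁ × D₂ → ℝ^{n_x} continuous and g : I × D₁ × D₂ → ℝ^{n_y} differentiable. Let (x,y) be a solution of the semi-explicit DAE on an open interval Ĩ ⊆ I, and suppose the partial derivative ∂_y g(t,x(t),y(t)) ∈ ℝ^{n_y × n_y} is invertible for every t ∈ Ĩ. Then y satisfies the explicit ODE y'(t) = − ∂_y g(t,x(t),y(t))⁻¹ ( ∂_t g(t,x(t),y(t)) + ∂_x g(t,x(t),y(t)) f(t,x(t),y(t)) ) for every t ∈ Ĩ. -/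
/-!
Differentiating the constraint `g(t, x t, y t) = 0` along the solution gives
`∂_t g + ∂_x g · x' + ∂_y g · y' = 0`, and invertibility of `∂_y g` lets one solve for `y'`.
-/

section Partials

variable {𝕜 E F G : Type*} [NontriviallyNormedField 𝕜]
  [NormedAddCommGroup E] [NormedSpace 𝕜 E] [NormedAddCommGroup F] [NormedSpace 𝕜 F]
  [NormedAddCommGroup G] [NormedSpace 𝕜 G]

theorem DifferentiableAt.fderiv_prod_apply {Φ : E × F → G} {a : E} {b : F}
    (hΦ : DifferentiableAt 𝕜 Φ (a, b)) (u : E) (w : F) :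
    fderiv 𝕜 Φ (a, b) (u, w) =
      fderiv 𝕜 (fun e => Φ (e, b)) a u + fderiv 𝕜 (fun e => Φ (a, e)) b w := by
  have hleft : HasFDerivAt (fun e => Φ (e, b)) (fderiv 𝕜 Φ (a, b) ∘L .inl 𝕜 E F) a :=
    hΦ.hasFDerivAt.comp a (hasFDerivAt_prodMk_left a b)
  have hright : HasFDerivAt (fun e => Φ (a, e)) (fderiv 𝕜 Φ (a, b) ∘L .inr 𝕜 E F) b :=
    hΦ.hasFDerivAt.comp b (hasFDerivAt_prodMk_right a b)
  rw [hleft.fderiv, hright.fderiv]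
  exact ((fderiv 𝕜 Φ (a, b)).comp_inl_add_comp_inr (u, w)).symm

theorem DifferentiableAt.differentiableAt_prodMk_right {Φ : E × F → G} {a : E} {b : F}
    (hΦ : DifferentiableAt 𝕜 Φ (a, b)) : DifferentiableAt 𝕜 (fun e => Φ (a, e)) b :=
  hΦ.comp b (differentiableAt_const a |>.prodMk differentiableAt_id)

theorem fderiv_apply_eq_zero_of_eventually_comp_eq_zero {Φ : E → G} {γ : 𝕜 → E} {t : 𝕜}
    {γ' : E} (hΦ : DifferentiableAt 𝕜 Φ (γ t)) (hγ : HasDerivAt γ γ' t)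
    (hzero : ∀ᶠ s in nhds t, Φ (γ s) = 0) : fderiv 𝕜 Φ (γ t) γ' = 0 :=
  (hΦ.hasFDerivAt.comp_hasDerivAt t hγ).unique
    ((hasDerivAt_const t 0).congr_of_eventuallyEq hzero)

end Partials

theorem ContinuousLinearMap.eq_neg_ringInverse_apply_of_add_apply_eq_zero {R M : Type*}
    [Ring R] [TopologicalSpace M] [AddCommGroup M] [Module R M] [IsTopologicalAddGroup M]
    {A : M →L[R] M} (hA : IsUnit A) {v w : M} (h : w + A v = 0) :
    v = -Ring.inverse A w := by
  have hAv : A v = -w := eq_neg_of_add_eq_zero_right h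
  calc v = (Ring.inverse A * A) v := by rw [Ring.inverse_mul_cancel A hA]; rfl
    _ = Ring.inverse A (A v) := rfl
    _ = -Ring.inverse A w := by rw [hAv, map_neg]

theorem dae_index_one_underlying_ode_general (nx ny : ℕ)
    (I : Set ℝ) (hIopen : IsOpen I)
    (D₁ : Set (Fin nx → ℝ)) (hD₁ : IsOpen D₁)
    (D₂ : Set (Fin ny → ℝ)) (hD₂ : IsOpen D₂)
    (f : ℝ → (Fin nx → ℝ) → (Fin ny → ℝ) → (Fin nx → ℝ))
    (g : ℝ → (Fin nx → ℝ) → (Fin ny → ℝ) → (Fin ny → ℝ))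
    (hgdiff : DifferentiableOn ℝ (fun p : ℝ × (Fin nx → ℝ) × (Fin ny → ℝ) =>
      g p.1 p.2.1 p.2.2) (I ×ˢ D₁ ×ˢ D₂))
    (J : Set ℝ) (hJI : J ⊆ I) (hJopen : IsOpen J)
    (x : ℝ → Fin nx → ℝ) (y : ℝ → Fin ny → ℝ)
    (hy : ContDiffOn ℝ 1 y J)
    (hxD : ∀ t ∈ J, x t ∈ D₁) (hyD : ∀ t ∈ J, y t ∈ D₂)
    (hode : ∀ t ∈ J, HasDerivAt x (f t (x t) (y t)) t)
    (halg : ∀ t ∈ J, g t (x t) (y t) = 0)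
    (hinv : ∀ t ∈ J, IsUnit (fderiv ℝ (fun y' => g t (x t) y') (y t))) :
    ∀ t ∈ J,
      deriv y t =
        -(Ring.inverse (fderiv ℝ (fun y' => g t (x t) y') (y t))
          (deriv (fun s => g s (x t) (y t)) t
            + fderiv ℝ (fun x' => g t x' (y t)) (x t) (f t (x t) (y t)))) := by
  intro t ht
  have hG : DifferentiableAt ℝ (fun p : ℝ × (Fin nx → ℝ) × (Fin ny → ℝ) => g p.1 p.2.1 p.2.2)
      (t, x t, y t) :=
    hgdiff.differentiableAt <| (hIopen.prod (hD₁.prod hD₂)).mem_nhds ⟨hJI ht, hxD t ht, hyD t ht⟩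
  have hy' : HasDerivAt y (deriv y t) t :=
    ((hy.differentiableOn one_ne_zero).differentiableAt (hJopen.mem_nhds ht)).hasDerivAt
  have hcurve : HasDerivAt (fun s => (s, x s, y s)) (1, f t (x t) (y t), deriv y t) t :=
    (hasDerivAt_id t).prodMk ((hode t ht).prodMk hy')
  have htotal := fderiv_apply_eq_zero_of_eventually_comp_eq_zero hG hcurve
    (Filter.eventually_of_mem (hJopen.mem_nhds ht) halg)
  rw [hG.fderiv_prod_apply, hG.differentiableAt_prodMk_right.fderiv_prod_apply, ← add_assoc]
    at htotal
  exact ContinuousLinearMap.eq_neg_ringInverse_apply_of_add_apply_eq_zero (hinv t ht) htotal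

/-- Along a solution of the semi-explicit DAE with invertible `∂_y g`, the
algebraic variable `y` satisfies the explicit (underlying) ODE
`y' = −(∂_y g)⁻¹ (∂_t g + ∂_x g · f)`. -/
theorem dae_index_one_underlying_ode (nx ny : ℕ)
    (I : Set ℝ) (hIopen : IsOpen I) (hIint : I.OrdConnected)
    (D₁ : Set (Fin nx → ℝ)) (hD₁ : IsOpen D₁)
    (D₂ : Set (Fin ny → ℝ)) (hD₂ : IsOpen D₂)
    (f : ℝ → (Fin nx → ℝ) → (Fin ny → ℝ) → (Fin nx → ℝ))
    (g : ℝ → (Fin nx → ℝ) → (Fin ny → ℝ) → (Fin ny → ℝ))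
    (hfcont : ContinuousOn (fun p : ℝ × (Fin nx → ℝ) × (Fin ny → ℝ) =>
      f p.1 p.2.1 p.2.2) (I ×ˢ D₁ ×ˢ D₂))
    (hgdiff : DifferentiableOn ℝ (fun p : ℝ × (Fin nx → ℝ) × (Fin ny → ℝ) =>
      g p.1 p.2.1 p.2.2) (I ×ˢ D₁ ×ˢ D₂))
    (J : Set ℝ) (hJI : J ⊆ I) (hJopen : IsOpen J) (hJint : J.OrdConnected)
    (x : ℝ → Fin nx → ℝ) (y : ℝ → Fin ny → ℝ)
    (hx : ContDiffOn ℝ 1 x J) (hy : ContDiffOn ℝ 1 y J)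
    (hxD : ∀ t ∈ J, x t ∈ D₁) (hyD : ∀ t ∈ J, y t ∈ D₂)
    (hode : ∀ t ∈ J, HasDerivAt x (f t (x t) (y t)) t)
    (halg : ∀ t ∈ J, g t (x t) (y t) = 0)
    (hinv : ∀ t ∈ J, IsUnit (fderiv ℝ (fun y' => g t (x t) y') (y t))) :
    ∀ t ∈ J,
      deriv y t =
        -(Ring.inverse (fderiv ℝ (fun y' => g t (x t) y') (y t))
          (deriv (fun s => g s (x t) (y t)) t
            + fderiv ℝ (fun x' => g t x' (y t)) (x t) (f t (x t) (y t)))) :=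
  dae_index_one_underlying_ode_general nx ny I hIopen D₁ hD₁ D₂ hD₂ f g hgdiff J hJI hJopen x y hy
    hxD hyD hode halg hinv
end
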